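/- arXiv:1704.07932 — 2 statements merged into one kernel-verified Lean document; each statement's English description precedes it below -/
import Mathlib

section
/- The adjoint action of a translation on the Coleman-Mandula operator is e^{i a·P} X_μ e^{-i a·P} = X_μ + a_μ - (a^ρ P_ρ P_μ)/M²; equivalently, since the double commutator [P_ρ,[P_σ, X_μ]] vanishes, the BCH expansion truncates: X_μ + i a^ρ[P_ρ, X_μ] = X_μ + a_μ - a^ρ P_ρ P_μ / M². -/
noncomputable section
open Complex BigOperators

/-- Minkowski metric diag(1,-1,-1,-1) with complex values. -/
def eta : Fin 4 → Fin 4 → ℂ := fun μ ν => if μ = ν then (if μ = 0 then 1 else -1) else 0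

variable {A : Type*}

/-- Commutator in an associative algebra. -/
def cmm [Ring A] (a b : A) : A := a * b - b * a

/-- Raised-index momentum `P^ν = η^{νλ} P_λ`. -/
def Pup [Ring A] [Algebra ℂ A] (P : Fin 4 → A) (ν : Fin 4) : A := ∑ lam, eta ν lam • P lam

/-- Mass-squared operator `M² = P_μ P^μ`. -/
def Msq [Ring A] [Algebra ℂ A] (P : Fin 4 → A) : A := ∑ μ, P μ * Pup P μ

/-- The (symmetrized) Coleman–Mandula operator
`X_μ = (1/(2M²)) (J_{μν} P^ν + P^ν J_{μν})`, with `Minv` a central inverse of `M²`. -/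
def CMX [Ring A] [Algebra ℂ A] (P : Fin 4 → A) (J : Fin 4 → Fin 4 → A) (Minv : A) (μ : Fin 4) : A :=
  ((1:ℂ)/2) • (Minv * ∑ ν, (J μ ν * Pup P ν + Pup P ν * J μ ν))

lemma cmm_add [Ring A] (a b c : A) : cmm a (b + c) = cmm a b + cmm a c := by
  simp only [cmm, mul_add, add_mul]; abel

lemma cmm_sub [Ring A] (a b c : A) : cmm a (b - c) = cmm a b - cmm a c := by
  simp only [cmm, mul_sub, sub_mul]; abel

lemma cmm_one [Ring A] (a : A) : cmm a 1 = 0 := by simp [cmm]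

lemma cmm_mul [Ring A] (a b c : A) : cmm a (b * c) = cmm a b * c + b * cmm a c := by
  simp only [cmm, mul_sub, sub_mul, add_mul, mul_add, mul_assoc]; abel

lemma cmm_smul [Ring A] [Algebra ℂ A] (s : ℂ) (a b : A) : cmm a (s • b) = s • cmm a b := by
  simp [cmm, mul_smul_comm, smul_mul_assoc, smul_sub]

lemma cmm_sum [Ring A] {ι : Type*} (s : Finset ι) (a : A) (f : ι → A) :
    cmm a (∑ i ∈ s, f i) = ∑ i ∈ s, cmm a (f i) := by
  simp [cmm, Finset.mul_sum, Finset.sum_mul, ← Finset.sum_sub_distrib]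

lemma eta_diag_sq (ρ : Fin 4) : eta ρ ρ * eta ρ ρ = 1 := by
  by_cases h : ρ = 0 <;> simp [_root_.eta, h]

lemma etasq (ρ τ : Fin 4) : ∑ ν, eta ρ ν * eta ν τ = if ρ = τ then 1 else 0 := by
  rw [Finset.sum_eq_single ρ]
  · by_cases h : ρ = τ
    · subst h; rw [if_pos rfl, eta_diag_sq]
    · rw [if_neg h]
      have : eta ρ τ = 0 := by simp [_root_.eta, h]
      rw [this, mul_zero]
  · intro ν _ hν
    have : eta ρ ν = 0 := by simp [_root_.eta, Ne.symm hν]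
    rw [this, zero_mul]
  · simp

/-- `[P_ρ, X_μ] = -i(η_{ρμ} - P_ρ P_μ/M²)`, the double commutator
`[P_σ,[P_ρ,X_μ]]` vanishes, and hence the BCH expansion of the translated operator
truncates: `X_μ + i a^ρ [P_ρ, X_μ] = X_μ + a_μ - a^ρ P_ρ P_μ / M²`. -/
theorem stmt5 [Ring A] [Algebra ℂ A]
    (P : Fin 4 → A) (J : Fin 4 → Fin 4 → A) (Minv : A)
    (hPP : ∀ μ ν, cmm (P μ) (P ν) = 0)
    (hJP : ∀ ρ σ μ, cmm (J ρ σ) (P μ) = I • (eta μ ρ • P σ - eta μ σ • P ρ))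
    (hJJ : ∀ μ ν ρ σ, cmm (J μ ν) (J ρ σ) =
      I • (eta μ ρ • J ν σ - eta μ σ • J ν ρ - eta ν ρ • J μ σ + eta ν σ • J μ ρ))
    (hMc : ∀ a : A, Msq P * a = a * Msq P)
    (hMinvL : Minv * Msq P = 1) (hMinvR : Msq P * Minv = 1)
    (hMinvC : ∀ a : A, Minv * a = a * Minv)
    (a : Fin 4 → ℝ) :
    (∀ ρ μ, cmm (P ρ) (CMX P J Minv μ)
      = (-I) • (eta ρ μ • (1 : A) - Minv * (P ρ * P μ))) ∧
    (∀ σ ρ μ, cmm (P σ) (cmm (P ρ) (CMX P J Minv μ)) = 0) ∧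
    (∀ μ, CMX P J Minv μ
        + I • (∑ ρ, (∑ τ, eta ρ τ * ((a τ : ℝ) : ℂ)) • cmm (P ρ) (CMX P J Minv μ))
      = CMX P J Minv μ + ((a μ : ℝ) : ℂ) • (1 : A)
        - Minv * ((∑ ρ, (∑ τ, eta ρ τ * ((a τ : ℝ) : ℂ)) • P ρ) * P μ)) := by

  have hcommP : ∀ ρ ν, P ρ * P ν = P ν * P ρ := by
    intro ρ ν
    have := hPP ρ ν
    rw [cmm, sub_eq_zero] at this
    exact this
  have hPupComm : ∀ ρ ν, P ρ * Pup P ν = Pup P ν * P ρ := by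
    intro ρ ν
    simp only [Pup, Finset.mul_sum, Finset.sum_mul, mul_smul_comm, smul_mul_assoc]
    exact Finset.sum_congr rfl fun lam _ => by rw [hcommP]
  have hPup : ∀ ρ ν, cmm (P ρ) (Pup P ν) = 0 := by
    intro ρ ν
    rw [cmm, hPupComm, sub_self]
  have hPJ : ∀ ρ μ ν, cmm (P ρ) (J μ ν) = I • (eta ρ ν • P μ - eta ρ μ • P ν) := by
    intro ρ μ ν
    have h1 : cmm (P ρ) (J μ ν) = -cmm (J μ ν) (P ρ) := by rw [cmm, cmm, neg_sub]
    rw [h1, hJP, ← smul_neg, neg_sub]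
  -- the key sum identity
  have hEtaPup : ∀ ρ, (∑ ν, eta ρ ν • Pup P ν) = P ρ := by
    intro ρ
    simp only [Pup, Finset.smul_sum, smul_smul]
    rw [Finset.sum_comm]
    calc (∑ lam, ∑ ν, (eta ρ ν * eta ν lam) • P lam)
        = ∑ lam, (∑ ν, eta ρ ν * eta ν lam) • P lam := by
          exact Finset.sum_congr rfl fun lam _ => (Finset.sum_smul).symm
      _ = ∑ lam, (if ρ = lam then (1:ℂ) else 0) • P lam := by
          exact Finset.sum_congr rfl fun lam _ => by rw [etasq]
      _ = P ρ := by simp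
  have key : ∀ ρ μ, cmm (P ρ) (CMX P J Minv μ)
      = (-I) • (eta ρ μ • (1 : A) - Minv * (P ρ * P μ)) := by
    intro ρ μ
    have hS : cmm (P ρ) (∑ ν, (J μ ν * Pup P ν + Pup P ν * J μ ν))
        = (2 * I) • (P μ * P ρ - eta ρ μ • Msq P) := by
      rw [cmm_sum]
      have hterm : ∀ ν, cmm (P ρ) (J μ ν * Pup P ν + Pup P ν * J μ ν)
          = (2 * I) • (eta ρ ν • (P μ * Pup P ν) - eta ρ μ • (P ν * Pup P ν)) := by
        intro ν
        rw [cmm_add, cmm_mul, cmm_mul, hPup, hPJ]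
        have h2 : Pup P ν * P μ = P μ * Pup P ν := (hPupComm μ ν).symm
        have h3 : Pup P ν * P ν = P ν * Pup P ν := (hPupComm ν ν).symm
        simp only [smul_mul_assoc, mul_smul_comm, sub_mul, mul_sub, zero_mul, mul_zero,
          add_zero, zero_add, smul_sub, h2, h3]
        rw [two_mul, add_smul]
        module
      calc (∑ ν, cmm (P ρ) (J μ ν * Pup P ν + Pup P ν * J μ ν))
          = ∑ ν, (2 * I) • (eta ρ ν • (P μ * Pup P ν) - eta ρ μ • (P ν * Pup P ν)) :=
            Finset.sum_congr rfl fun ν _ => hterm ν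
        _ = (2 * I) • (∑ ν, (eta ρ ν • (P μ * Pup P ν) - eta ρ μ • (P ν * Pup P ν))) := by
            rw [Finset.smul_sum]
        _ = (2 * I) • (P μ * P ρ - eta ρ μ • Msq P) := by
            congr 1
            rw [Finset.sum_sub_distrib, ← Finset.smul_sum, Msq]
            congr 1
            rw [← hEtaPup ρ, Finset.mul_sum]
            exact Finset.sum_congr rfl fun ν _ => by rw [mul_smul_comm]
    have hMinvPull : cmm (P ρ) (Minv * (∑ ν, (J μ ν * Pup P ν + Pup P ν * J μ ν)))
        = Minv * cmm (P ρ) (∑ ν, (J μ ν * Pup P ν + Pup P ν * J μ ν)) := by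
      simp only [cmm]
      rw [← mul_assoc, ← hMinvC (P ρ), mul_assoc, mul_sub, mul_assoc]
    rw [CMX, cmm_smul, hMinvPull, hS, mul_smul_comm, smul_smul]
    have : (1:ℂ)/2 * (2 * I) = I := by ring
    rw [this, mul_sub, mul_smul_comm, hMinvL, hcommP μ ρ]
    module
  refine ⟨key, ?_, ?_⟩
  · intro σ ρ μ
    have cM : cmm (P σ) Minv = 0 := by rw [cmm, ← hMinvC (P σ), sub_self]
    rw [key ρ μ, cmm_smul, cmm_sub, cmm_smul, cmm_one, cmm_mul, cmm_mul, hPP, hPP, cM]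
    simp
  · intro μ
    have hsum : (∑ ρ, (∑ τ, eta ρ τ * ((a τ : ℝ) : ℂ)) • cmm (P ρ) (CMX P J Minv μ))
        = ∑ ρ, (∑ τ, eta ρ τ * ((a τ : ℝ) : ℂ)) • ((-I) • (eta ρ μ • (1 : A) - Minv * (P ρ * P μ))) :=
      Finset.sum_congr rfl fun ρ _ => by rw [key]
    rw [hsum]
    have step : I • (∑ ρ, (∑ τ, eta ρ τ * ((a τ : ℝ) : ℂ)) • ((-I) • (eta ρ μ • (1 : A) - Minv * (P ρ * P μ))))
        = ∑ ρ, (∑ τ, eta ρ τ * ((a τ : ℝ) : ℂ)) • (eta ρ μ • (1 : A) - Minv * (P ρ * P μ)) := by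
      rw [Finset.smul_sum]
      refine Finset.sum_congr rfl fun ρ _ => ?_
      rw [smul_comm I, smul_smul, smul_smul]
      congr 1
      have hI := Complex.I_mul_I
      linear_combination (-(∑ τ, _root_.eta ρ τ * ((a τ : ℝ) : ℂ))) * hI
    rw [step]
    have split : (∑ ρ, (∑ τ, eta ρ τ * ((a τ : ℝ) : ℂ)) • (eta ρ μ • (1 : A) - Minv * (P ρ * P μ)))
        = ((a μ : ℝ) : ℂ) • (1 : A) - Minv * ((∑ ρ, (∑ τ, eta ρ τ * ((a τ : ℝ) : ℂ)) • P ρ) * P μ) := by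
      simp only [smul_sub]
      rw [Finset.sum_sub_distrib]
      congr 1
      · have h1 : ∀ ρ : Fin 4, (∑ τ, eta ρ τ * ((a τ : ℝ) : ℂ)) • eta ρ μ • (1 : A)
            = ((∑ τ, eta ρ τ * ((a τ : ℝ) : ℂ)) * eta ρ μ) • (1 : A) := fun ρ => by rw [smul_smul]
        calc (∑ ρ, (∑ τ, eta ρ τ * ((a τ : ℝ) : ℂ)) • eta ρ μ • (1 : A))
            = (∑ ρ, (∑ τ, eta ρ τ * ((a τ : ℝ) : ℂ)) * eta ρ μ) • (1 : A) := by
              rw [Finset.sum_smul]; exact Finset.sum_congr rfl fun ρ _ => h1 ρ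
          _ = ((a μ : ℝ) : ℂ) • (1 : A) := by
              congr 1
              rw [Finset.sum_eq_single μ]
              · rw [Finset.sum_eq_single μ]
                · have h2 := eta_diag_sq μ
                  calc (_root_.eta μ μ * ((a μ : ℝ) : ℂ)) * _root_.eta μ μ
                      = (_root_.eta μ μ * _root_.eta μ μ) * ((a μ : ℝ) : ℂ) := by ring
                    _ = ((a μ : ℝ) : ℂ) := by rw [h2, one_mul]
                · intro τ _ hτ
                  have : _root_.eta μ τ = 0 := by simp [_root_.eta, Ne.symm hτ]
                  rw [this, zero_mul]
                · simp
              · intro ρ _ hρ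
                have : _root_.eta ρ μ = 0 := by simp [_root_.eta, hρ]
                rw [this, mul_zero]
              · simp
      · rw [Finset.sum_mul, Finset.mul_sum]
        exact Finset.sum_congr rfl fun ρ _ => by
          rw [smul_mul_assoc, mul_smul_comm]
    rw [split]
    abel
end
end

section
/- The deformed Snyder spacetime is translation covariant: with X_μ^Θ ↦ X_μ^Θ + a_μ - (a·P)P_μ/M² under translation by a, one has [X_μ^Θ + a_μ - (a·P)P_μ/M², X_ν^Θ + a_ν - (a·P)P_ν/M²] = [X_μ^Θ, X_ν^Θ] + (i/M²)(a_ν P_μ - a_μ P_ν). -/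
set_option linter.unusedSectionVars false
set_option linter.unusedVariables false
set_option maxHeartbeats 1600000


noncomputable section
open Complex BigOperators

variable {A : Type*}

/-- `(ΘP)_μ = Θ_μ^λ P_λ`, index raised with η. -/
def thetaP [Ring A] [Algebra ℂ A] (Θ : Fin 4 → Fin 4 → ℝ) (P : Fin 4 → A) (μ : Fin 4) : A :=
  ∑ lam, (∑ ρ, ((Θ μ ρ : ℝ) : ℂ) * eta ρ lam) • P lam

section Aux
variable [Ring A] [Algebra ℂ A]

lemma cmm_add_left (x y z : A) : cmm (x + y) z = cmm x z + cmm y z := by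
  simp only [cmm]; noncomm_ring
lemma cmm_add_right (x y z : A) : cmm x (y + z) = cmm x y + cmm x z := by
  simp only [cmm]; noncomm_ring
lemma cmm_sub_left (x y z : A) : cmm (x - y) z = cmm x z - cmm y z := by
  simp only [cmm]; noncomm_ring
lemma cmm_sub_right (x y z : A) : cmm x (y - z) = cmm x y - cmm x z := by
  simp only [cmm]; noncomm_ring
lemma cmm_smul_left (r : ℂ) (x y : A) : cmm (r • x) y = r • cmm x y := by
  simp only [cmm, smul_mul_assoc, mul_smul_comm, smul_sub]
lemma cmm_smul_right (r : ℂ) (x y : A) : cmm x (r • y) = r • cmm x y := by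
  simp only [cmm, smul_mul_assoc, mul_smul_comm, smul_sub]
lemma cmm_mul_left (x y z : A) : cmm (x * y) z = x * cmm y z + cmm x z * y := by
  simp only [cmm]; noncomm_ring
lemma cmm_mul_right (x y z : A) : cmm x (y * z) = cmm x y * z + y * cmm x z := by
  simp only [cmm]; noncomm_ring
lemma cmm_sum_left {ι : Type*} (s : Finset ι) (f : ι → A) (y : A) :
    cmm (∑ i ∈ s, f i) y = ∑ i ∈ s, cmm (f i) y := by
  simp only [cmm, Finset.sum_mul, Finset.mul_sum, Finset.sum_sub_distrib]
lemma cmm_sum_right {ι : Type*} (s : Finset ι) (x : A) (f : ι → A) :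
    cmm x (∑ i ∈ s, f i) = ∑ i ∈ s, cmm x (f i) := by
  simp only [cmm, Finset.sum_mul, Finset.mul_sum, Finset.sum_sub_distrib]
lemma cmm_of_comm {x y : A} (h : x * y = y * x) : cmm x y = 0 := by
  simp [cmm, h]
lemma cmm_skew (x y : A) : cmm x y = - cmm y x := by simp only [cmm]; abel
lemma cmm_one_left (x : A) : cmm (1:A) x = 0 := by simp [cmm]
lemma cmm_one_right (x : A) : cmm x (1:A) = 0 := by simp [cmm]

lemma eta_mul_eta (σ lam : Fin 4) : (∑ ν, eta σ ν * eta ν lam) = if σ = lam then 1 else 0 := by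
  have h : ∀ i j : Fin 4, eta i j = if i = j then (if i = 0 then 1 else -1) else 0 :=
    fun _ _ => rfl
  fin_cases σ <;> fin_cases lam <;>
    simp (config := { decide := true }) [Fin.sum_univ_four, h]
lemma eta_symm (μ ν : Fin 4) : eta μ ν = eta ν μ := by
  by_cases h : μ = ν
  · subst h; rfl
  · simp [_root_.eta, h, Ne.symm h]

variable (P : Fin 4 → A)

lemma pcomm (hPP : ∀ μ ν, cmm (P μ) (P ν) = 0) (σ τ : Fin 4) : P σ * P τ = P τ * P σ := by
  have := hPP σ τ; rw [cmm] at this; linear_combination (norm := noncomm_ring) this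

lemma comboP (hPP : ∀ μ ν, cmm (P μ) (P ν) = 0) (f : Fin 4 → ℂ) (τ : Fin 4) :
    (∑ i, f i • P i) * P τ = P τ * ∑ i, f i • P i := by
  rw [Finset.sum_mul, Finset.mul_sum]
  exact Finset.sum_congr rfl fun i _ => by
    rw [smul_mul_assoc, mul_smul_comm, pcomm P hPP]

lemma combocombo (hPP : ∀ μ ν, cmm (P μ) (P ν) = 0) (f g : Fin 4 → ℂ) :
    (∑ i, f i • P i) * (∑ j, g j • P j) = (∑ j, g j • P j) * (∑ i, f i • P i) := by
  rw [Finset.sum_mul, Finset.mul_sum]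
  exact Finset.sum_congr rfl fun i _ => by
    rw [smul_mul_assoc, mul_smul_comm, comboP P hPP]

lemma Pup_eq (ν : Fin 4) : Pup P ν = ∑ lam, eta ν lam • P lam := rfl

lemma etaPup (σ : Fin 4) : ∑ ν, eta σ ν • Pup P ν = P σ := by
  simp only [Pup_eq, Finset.smul_sum, smul_smul]
  rw [Finset.sum_comm]
  have h1 : ∀ lam : Fin 4, ∑ ν, (eta σ ν * eta ν lam) • P lam
      = (if σ = lam then (1:ℂ) else 0) • P lam := by
    intro lam; rw [← Finset.sum_smul, eta_mul_eta]
  rw [Finset.sum_congr rfl fun lam _ => h1 lam]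
  simp

lemma PupP_comm (hPP : ∀ μ ν, cmm (P μ) (P ν) = 0) (ν τ : Fin 4) :
    Pup P ν * P τ = P τ * Pup P ν := comboP P hPP _ τ

lemma XP (J : Fin 4 → Fin 4 → A) (Minv : A)
    (hPP : ∀ μ ν, cmm (P μ) (P ν) = 0)
    (hJP : ∀ ρ σ μ, cmm (J ρ σ) (P μ) = I • (eta μ ρ • P σ - eta μ σ • P ρ))
    (hMinvL : Minv * Msq P = 1)
    (hMinvC : ∀ a : A, Minv * a = a * Minv) (μ σ : Fin 4) :
    cmm (CMX P J Minv μ) (P σ) = I • (eta μ σ • (1:A) - Minv * (P μ * P σ)) := by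
  have hterm : ∀ ν' : Fin 4, cmm (J μ ν' * Pup P ν' + Pup P ν' * J μ ν') (P σ) =
      I • ((eta σ μ • (P ν' * Pup P ν') - eta σ ν' • (P μ * Pup P ν'))
          + (eta σ μ • (Pup P ν' * P ν') - eta σ ν' • (Pup P ν' * P μ))) := by
    intro ν'
    rw [cmm_add_left, cmm_mul_left, cmm_mul_left,
        cmm_of_comm (PupP_comm P hPP ν' σ), hJP μ ν' σ]
    simp only [mul_zero, zero_mul, zero_add, add_zero, smul_mul_assoc,
      mul_smul_comm, sub_mul, mul_sub, smul_sub, smul_add]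
    try module
  have hsum : cmm (∑ ν', (J μ ν' * Pup P ν' + Pup P ν' * J μ ν')) (P σ)
      = I • ((eta σ μ • Msq P - P μ * P σ) + (eta σ μ • Msq P - P μ * P σ)) := by
    rw [cmm_sum_left, Finset.sum_congr rfl fun ν' _ => hterm ν', ← Finset.smul_sum]
    congr 1
    rw [Finset.sum_add_distrib, Finset.sum_sub_distrib, Finset.sum_sub_distrib]
    congr 1
    · congr 1
      · rw [← Finset.smul_sum]; rfl
      · rw [Finset.sum_congr rfl fun ν' _ => (mul_smul_comm _ _ _).symm,
            ← Finset.mul_sum, etaPup]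
    · congr 1
      · rw [Finset.sum_congr rfl fun ν' _ =>
            congrArg (eta σ μ • ·) (PupP_comm P hPP ν' ν'), ← Finset.smul_sum]; rfl
      · rw [Finset.sum_congr rfl fun ν' _ => (smul_mul_assoc _ _ _).symm,
            ← Finset.sum_mul, etaPup, pcomm P hPP]
  rw [CMX, cmm_smul_left, cmm_mul_left, cmm_of_comm (hMinvC (P σ)), hsum,
      zero_mul, add_zero, eta_symm μ σ]
  simp only [mul_smul_comm, mul_add, mul_sub, hMinvL]
  module

lemma Xcombo (J : Fin 4 → Fin 4 → A) (Minv : A)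
    (hPP : ∀ μ ν, cmm (P μ) (P ν) = 0)
    (hJP : ∀ ρ σ μ, cmm (J ρ σ) (P μ) = I • (eta μ ρ • P σ - eta μ σ • P ρ))
    (hMinvL : Minv * Msq P = 1)
    (hMinvC : ∀ a : A, Minv * a = a * Minv) (κ : Fin 4) (f : Fin 4 → ℂ) :
    cmm (CMX P J Minv κ) (∑ ρ, f ρ • P ρ)
      = I • ((∑ ρ, f ρ * eta κ ρ) • (1:A) - Minv * (P κ * ∑ ρ, f ρ • P ρ)) := by
  rw [cmm_sum_right]
  have h1 : ∀ ρ, cmm (CMX P J Minv κ) (f ρ • P ρ)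
      = I • ((f ρ * eta κ ρ) • (1:A) - Minv * (P κ * (f ρ • P ρ))) := by
    intro ρ
    rw [cmm_smul_right, XP P J Minv hPP hJP hMinvL hMinvC κ ρ]
    simp only [smul_sub, smul_smul, mul_smul_comm]
    module
  rw [Finset.sum_congr rfl fun ρ _ => h1 ρ, ← Finset.smul_sum, Finset.sum_sub_distrib,
      ← Finset.sum_smul, ← Finset.mul_sum, ← Finset.mul_sum]

end Aux

/-- translation covariance of the deformed Snyder spacetime:
with `X_μ^Θ ↦ X_μ^Θ + a_μ - (a·P) P_μ/M²` one has
`[X'^Θ_μ, X'^Θ_ν] = [X_μ^Θ, X_ν^Θ] + (i/M²)(a_ν P_μ - a_μ P_ν)`. -/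
theorem stmt9 [Ring A] [Algebra ℂ A]
    (P : Fin 4 → A) (J : Fin 4 → Fin 4 → A) (Minv : A)
    (hPP : ∀ μ ν, cmm (P μ) (P ν) = 0)
    (hJP : ∀ ρ σ μ, cmm (J ρ σ) (P μ) = I • (eta μ ρ • P σ - eta μ σ • P ρ))
    (hJJ : ∀ μ ν ρ σ, cmm (J μ ν) (J ρ σ) =
      I • (eta μ ρ • J ν σ - eta μ σ • J ν ρ - eta ν ρ • J μ σ + eta ν σ • J μ ρ))
    (hMc : ∀ a : A, Msq P * a = a * Msq P)
    (hMinvL : Minv * Msq P = 1) (hMinvR : Msq P * Minv = 1)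
    (hMinvC : ∀ a : A, Minv * a = a * Minv)
    (Θ : Fin 4 → Fin 4 → ℝ) (hΘ : ∀ μ ν, Θ μ ν = - Θ ν μ) (a : Fin 4 → ℝ) :
    ∀ μ ν,
      cmm ((CMX P J Minv μ + thetaP Θ P μ) + ((a μ : ℝ) : ℂ) • (1 : A)
            - Minv * ((∑ ρ, (∑ τ, eta ρ τ * ((a τ : ℝ) : ℂ)) • P ρ) * P μ))
          ((CMX P J Minv ν + thetaP Θ P ν) + ((a ν : ℝ) : ℂ) • (1 : A)
            - Minv * ((∑ ρ, (∑ τ, eta ρ τ * ((a τ : ℝ) : ℂ)) • P ρ) * P ν))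
        = cmm (CMX P J Minv μ + thetaP Θ P μ) (CMX P J Minv ν + thetaP Θ P ν)
          + I • (Minv * (((a ν : ℝ) : ℂ) • P μ - ((a μ : ℝ) : ℂ) • P ν)) := by
  intro μ ν
  set Q : A := ∑ ρ, (∑ τ, eta ρ τ * ((a τ : ℝ) : ℂ)) • P ρ with hQdef
  -- basic commutation facts
  have hQP : ∀ τ, Q * P τ = P τ * Q := fun τ => comboP P hPP _ τ
  have hθP : ∀ κ τ, thetaP Θ P κ * P τ = P τ * thetaP Θ P κ := fun κ τ => comboP P hPP _ τ
  have hθQ : ∀ κ, thetaP Θ P κ * Q = Q * thetaP Θ P κ := fun κ => combocombo P hPP _ _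
  have key : ∀ σ τ, (P σ * Q) * P τ = (P τ * Q) * P σ := by
    intro σ τ
    rw [mul_assoc (P σ) Q (P τ), hQP τ, ← mul_assoc, pcomm P hPP σ τ,
        mul_assoc (P τ) (P σ) Q, ← hQP σ, ← mul_assoc]
  -- zero commutators
  have cM : ∀ x : A, Commute Minv x := fun x => (hMinvC x : Commute Minv x)
  have cθQ : ∀ κ, Commute (thetaP Θ P κ) Q := hθQ
  have cθP : ∀ κ τ, Commute (thetaP Θ P κ) (P τ) := hθP
  have cQP : ∀ τ, Commute Q (P τ) := hQP
  have cPP : ∀ σ τ, Commute (P σ) (P τ) := fun σ τ => pcomm P hPP σ τ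
  have cθMQP : ∀ κ τ, Commute (thetaP Θ P κ) (Minv * (Q * P τ)) := fun κ τ =>
    ((cM (thetaP Θ P κ)).symm).mul_right ((cθQ κ).mul_right (cθP κ τ))
  have zθM : ∀ κ τ, cmm (thetaP Θ P κ) (Minv * (Q * P τ)) = 0 := fun κ τ =>
    cmm_of_comm (cθMQP κ τ)
  have zMθ : ∀ κ τ, cmm (Minv * (Q * P κ)) (thetaP Θ P τ) = 0 := by
    intro κ τ; rw [cmm_skew, zθM, neg_zero]
  have cQMQP : ∀ σ, Commute Q (Minv * (Q * P σ)) := fun σ =>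
    ((cM Q).symm).mul_right ((Commute.refl Q).mul_right (cQP σ))
  have cPMQP : ∀ κ σ, Commute (P κ) (Minv * (Q * P σ)) := fun κ σ =>
    ((cM (P κ)).symm).mul_right (((cQP κ).symm).mul_right (cPP κ σ))
  have zMM : cmm (Minv * (Q * P μ)) (Minv * (Q * P ν)) = 0 :=
    cmm_of_comm ((cM _).mul_left ((cQMQP ν).mul_left (cPMQP μ ν)))
  -- scalar identity
  have hscal : ∀ κ : Fin 4, (∑ ρ, (∑ τ, eta ρ τ * ((a τ : ℝ) : ℂ)) * eta κ ρ) = ((a κ : ℝ) : ℂ) := by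
    intro κ
    have h2 : ∀ ρ, (∑ τ, eta ρ τ * ((a τ:ℝ):ℂ)) * eta κ ρ
        = ∑ τ, (eta κ ρ * eta ρ τ) * ((a τ:ℝ):ℂ) := by
      intro ρ; rw [Finset.sum_mul]; exact Finset.sum_congr rfl fun τ _ => by ring
    rw [Finset.sum_congr rfl fun ρ _ => h2 ρ, Finset.sum_comm]
    have h3 : ∀ τ, (∑ ρ, (eta κ ρ * eta ρ τ) * ((a τ:ℝ):ℂ))
        = (if κ = τ then (1:ℂ) else 0) * ((a τ:ℝ):ℂ) := by
      intro τ; rw [← Finset.sum_mul, eta_mul_eta]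
    rw [Finset.sum_congr rfl fun τ _ => h3 τ]
    simp
  -- [X_κ, Q]
  have hXQ : ∀ κ, cmm (CMX P J Minv κ) Q
      = I • (((a κ : ℝ) : ℂ) • (1:A) - Minv * (P κ * Q)) := by
    intro κ
    rw [hQdef, Xcombo P J Minv hPP hJP hMinvL hMinvC κ
      (fun ρ => ∑ τ, eta ρ τ * ((a τ : ℝ) : ℂ)), hscal κ]
  -- [X_κ, Minv (Q P_τ)]
  have hXMQP : ∀ κ τ, cmm (CMX P J Minv κ) (Minv * (Q * P τ)) =
      I • (((a κ : ℝ) : ℂ) • (Minv * P τ) - Minv * (Minv * (P κ * Q) * P τ)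
          + (eta κ τ • (Minv * Q) - Minv * (Q * (Minv * (P κ * P τ))))) := by
    intro κ τ
    rw [cmm_mul_right, cmm_of_comm (hMinvC (CMX P J Minv κ)).symm, zero_mul, zero_add,
        cmm_mul_right, hXQ κ, XP P J Minv hPP hJP hMinvL hMinvC κ τ]
    simp only [smul_mul_assoc, mul_smul_comm, sub_mul, mul_sub, one_mul, mul_one,
      mul_add, smul_add, smul_sub]
    try module
  -- symmetry facts
  have s1 : Minv * (Minv * (P ν * Q) * P μ) = Minv * (Minv * (P μ * Q) * P ν) := by
    rw [mul_assoc Minv (P ν * Q) (P μ), mul_assoc Minv (P μ * Q) (P ν), key ν μ]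
  have s2 : Minv * (Q * (Minv * (P ν * P μ))) = Minv * (Q * (Minv * (P μ * P ν))) := by
    rw [pcomm P hPP ν μ]
  -- expand everything
  simp only [cmm_sub_left, cmm_sub_right, cmm_add_left, cmm_add_right,
    cmm_smul_left, cmm_smul_right, cmm_one_left, cmm_one_right, smul_zero,
    zθM, zMθ, zMM]
  rw [cmm_skew (Minv * (Q * P μ)) (CMX P J Minv ν), hXMQP μ ν, hXMQP ν μ, s1, s2,
      eta_symm ν μ, mul_sub Minv, mul_smul_comm, mul_smul_comm]
  module
end
end
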